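/- For spin s > 1 (i.e. s ≥ 3/2), for all n ∈ {−s, −s+1, …, s} and all r ≥ 0, the worst-case squared calibration error satisfies max_{m ∈ {−s,…,s}} ( A_s(r,n) + m² B_s(r,n) ) ≥ (s − √(2s+3) + 2)/2, with equality attained at n = s and r = (2s − √(2s+3) + 3)/2 (where moreover B_s(r,s) = 0, so the value A_s(r,s) + m² B_s(r,s) = (s − √(2s+3) + 2)/2 is the same for every m). Hence the minimum over n and r of this worst-case error equals Δ_min(s) = (s − √(2s+3) + 2)/2. -/
import Mathlib


open Matrix Complex
open scoped ComplexOrder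

noncomputable section

/-- spin value s = j/2 -/
def sVal (j : ℕ) : ℝ := (j : ℝ) / 2

/-- m-value of the k-th basis vector: m = k - s -/
def mVal (j : ℕ) (k : Fin (j + 1)) : ℝ := (k : ℝ) - sVal j

/-- L₃ -/
def L3 (j : ℕ) : Matrix (Fin (j + 1)) (Fin (j + 1)) ℂ :=
  Matrix.diagonal (fun k => (mVal j k : ℂ))

/-- raising operator L₊ -/
def Lp (j : ℕ) : Matrix (Fin (j + 1)) (Fin (j + 1)) ℂ :=
  Matrix.of fun i k =>
    if (i : ℕ) = (k : ℕ) + 1 then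
      ((Real.sqrt (sVal j * (sVal j + 1) - mVal j k * (mVal j k + 1)) : ℝ) : ℂ)
    else 0

/-- lowering operator L₋ -/
def Lm (j : ℕ) : Matrix (Fin (j + 1)) (Fin (j + 1)) ℂ :=
  Matrix.of fun i k =>
    if (i : ℕ) + 1 = (k : ℕ) then
      ((Real.sqrt (sVal j * (sVal j + 1) - mVal j k * (mVal j k - 1)) : ℝ) : ℂ)
    else 0

/-- L₁ = (L₊ + L₋)/2 -/
def L1 (j : ℕ) : Matrix (Fin (j + 1)) (Fin (j + 1)) ℂ := (1 / 2 : ℂ) • (Lp j + Lm j)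

/-- L₂ = (L₊ − L₋)/(2i) -/
def L2 (j : ℕ) : Matrix (Fin (j + 1)) (Fin (j + 1)) ℂ :=
  (1 / (2 * Complex.I)) • (Lp j - Lm j)

/-- density operator -/
def IsDensity {j : ℕ} (ρ : Matrix (Fin (j + 1)) (Fin (j + 1)) ℂ) : Prop :=
  ρ.PosSemidef ∧ ρ.trace = 1

/-- expectation value -/
def expVal {j : ℕ} (ρ A : Matrix (Fin (j + 1)) (Fin (j + 1)) ℂ) : ℝ :=
  ((ρ * A).trace).re

/-- variance -/
def Var {j : ℕ} (ρ A : Matrix (Fin (j + 1)) (Fin (j + 1)) ℂ) : ℝ :=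
  ((ρ * A ^ 2).trace).re - (((ρ * A).trace).re) ^ 2

/-- angular momentum component along a direction e ∈ ℝ³ -/
def dirL (j : ℕ) (e : Fin 3 → ℝ) : Matrix (Fin (j + 1)) (Fin (j + 1)) ℂ :=
  (e 0 : ℂ) • L1 j + (e 1 : ℂ) • L2 j + (e 2 : ℂ) • L3 j

/-- A_s(r,n) -/
def Afun (j : ℕ) (r n : ℝ) : ℝ :=
  r ^ 2 * sVal j * (sVal j + 1) * (-2 * n ^ 2 + 2 * sVal j * (sVal j + 1) - 1) /
    (sVal j * (sVal j + 1) * (2 * sVal j - 1) * (2 * sVal j + 3))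

/-- B_s(r,n) -/
def Bfun (j : ℕ) (r n : ℝ) : ℝ :=
  (6 * n ^ 2 * r ^ 2 - 2 * n * r * (4 * sVal j * (sVal j + 1) - 3) +
      sVal j * (sVal j + 1) * (-2 * r ^ 2 + 4 * sVal j * (sVal j + 1) - 3)) /
    (sVal j * (sVal j + 1) * (2 * sVal j - 1) * (2 * sVal j + 3))

lemma key1 (s n r t : ℝ) (hs : 3/2 ≤ s) (hn : -s ≤ n) (hn2 : n ≤ s) (hr : 0 ≤ r)
    (ht : t^2 = 2*s+3) (ht0 : 0 ≤ t)
    (hB : 0 ≤ 6*n^2*r^2 - 2*n*r*(4*s*(s+1)-3) + s*(s+1)*(-2*r^2+4*s*(s+1)-3)) :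
    (s - t + 2)/2 * (s*(s+1)*(2*s-1)*(2*s+3)) ≤
      r^2*s*(s+1)*(-2*n^2+2*s*(s+1)-1) +
      s^2*(6*n^2*r^2 - 2*n*r*(4*s*(s+1)-3) + s*(s+1)*(-2*r^2+4*s*(s+1)-3)) := by
  have ht2 : 2 ≤ t := by nlinarith
  have h1 : 0 ≤ 2*s^2+s+1 - t*(s+1) := by nlinarith
  have h2 : 0 ≤ s*t - s - 1 := by nlinarith
  have hT1 : 0 ≤ s*t*(s+1)*(2*s-1) * (2*n*r - s*(2*s+3) + s*t)^2 :=
    mul_nonneg (mul_nonneg (mul_nonneg (mul_nonneg (by linarith) ht0) (by linarith)) (by linarith)) (sq_nonneg _)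
  have hT2 : 0 ≤ 2*s^2*(2*s^2+s+1-t*(s+1)) *
      (6*n^2*r^2 - 2*n*r*(4*s*(s+1)-3) + s*(s+1)*(-2*r^2+4*s*(s+1)-3)) :=
    mul_nonneg (mul_nonneg (by positivity) h1) hB
  have hT3 : 0 ≤ 4*s*t*(s+1)*(s*t-s-1) * (r^2*(s^2-n^2)) := by
    have h5 : 0 ≤ r^2*(s^2-n^2) := mul_nonneg (sq_nonneg r) (by nlinarith)
    have h4 : 0 ≤ 4*s*t*(s+1)*(s*t-s-1) :=
      mul_nonneg (mul_nonneg (mul_nonneg (by linarith) ht0) (by linarith)) h2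
    exact mul_nonneg h4 h5
  have H : 4*s^2*((r^2*s*(s+1)*(-2*n^2+2*s*(s+1)-1) +
      s^2*(6*n^2*r^2 - 2*n*r*(4*s*(s+1)-3) + s*(s+1)*(-2*r^2+4*s*(s+1)-3))) -
      (s - t + 2)/2 * (s*(s+1)*(2*s-1)*(2*s+3))) =
      s*t*(s+1)*(2*s-1) * (2*n*r - s*(2*s+3) + s*t)^2 +
      2*s^2*(2*s^2+s+1-t*(s+1)) *
        (6*n^2*r^2 - 2*n*r*(4*s*(s+1)-3) + s*(s+1)*(-2*r^2+4*s*(s+1)-3)) +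
      4*s*t*(s+1)*(s*t-s-1) * (r^2*(s^2-n^2)) := by
    linear_combination (4*s^2*n*r + 4*s^2*n^2*r^2 - 6*s^3 + s^3*t - 4*s^3*n*r + 4*s^3*n^2*r^2
      + 2*s^4 - s^4*t - 4*s^4*r^2 - 8*s^4*n*r + 16*s^5 - 2*s^5*t - 4*s^5*r^2 + 8*s^6) * ht
  have h4s : (0:ℝ) < 4*s^2 := by positivity
  have hX : 0 ≤ 4*s^2*((r^2*s*(s+1)*(-2*n^2+2*s*(s+1)-1) +
      s^2*(6*n^2*r^2 - 2*n*r*(4*s*(s+1)-3) + s*(s+1)*(-2*r^2+4*s*(s+1)-3))) -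
      (s - t + 2)/2 * (s*(s+1)*(2*s-1)*(2*s+3))) := by linarith
  have := (mul_nonneg_iff_of_pos_left h4s).mp hX
  linarith


lemma key2 (s n r t : ℝ) (hs : 3/2 ≤ s) (hn : -s ≤ n) (hn2 : n ≤ s) (hr : 0 ≤ r)
    (ht : t^2 = 2*s+3) (ht0 : 0 ≤ t)
    (hB : 6*n^2*r^2 - 2*n*r*(4*s*(s+1)-3) + s*(s+1)*(-2*r^2+4*s*(s+1)-3) ≤ 0) :
    (s - t + 2)/2 * (s*(s+1)*(2*s-1)*(2*s+3)) ≤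
      r^2*s*(s+1)*(-2*n^2+2*s*(s+1)-1) +
      (1/4)*(6*n^2*r^2 - 2*n*r*(4*s*(s+1)-3) + s*(s+1)*(-2*r^2+4*s*(s+1)-3)) := by
  have ht2 : 2 ≤ t := by nlinarith
  have h1 : 0 ≤ 2*s+2-t := by nlinarith
  have h2 : 0 ≤ s*t - s - 1 := by nlinarith
  have hT1 : 0 ≤ s*t*(s+1)*(2*s-1) * (2*n*r - s*(2*s+3) + s*t)^2 :=
    mul_nonneg (mul_nonneg (mul_nonneg (mul_nonneg (by linarith) ht0) (by linarith))
      (by linarith)) (sq_nonneg _)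
  have hT2 : 0 ≤ s^2*t*(2*s+2-t) *
      (-(6*n^2*r^2 - 2*n*r*(4*s*(s+1)-3) + s*(s+1)*(-2*r^2+4*s*(s+1)-3))) :=
    mul_nonneg (mul_nonneg (mul_nonneg (sq_nonneg s) ht0) h1) (by linarith)
  have hT3 : 0 ≤ 4*s*t*(s+1)*(s*t-s-1) * (r^2*(s^2-n^2)) := by
    have h5 : 0 ≤ r^2*(s^2-n^2) := mul_nonneg (sq_nonneg r) (by nlinarith)
    have h4 : 0 ≤ 4*s*t*(s+1)*(s*t-s-1) :=
      mul_nonneg (mul_nonneg (mul_nonneg (by linarith) ht0) (by linarith)) h2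
    exact mul_nonneg h4 h5
  have H : 4*s^2*((r^2*s*(s+1)*(-2*n^2+2*s*(s+1)-1) +
      (1/4)*(6*n^2*r^2 - 2*n*r*(4*s*(s+1)-3) + s*(s+1)*(-2*r^2+4*s*(s+1)-3))) -
      (s - t + 2)/2 * (s*(s+1)*(2*s-1)*(2*s+3))) =
      s*t*(s+1)*(2*s-1) * (2*n*r - s*(2*s+3) + s*t)^2 +
      s^2*t*(2*s+2-t) *
        (-(6*n^2*r^2 - 2*n*r*(4*s*(s+1)-3) + s*(s+1)*(-2*r^2+4*s*(s+1)-3))) +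
      4*s*t*(s+1)*(s*t-s-1) * (r^2*(s^2-n^2)) := by
    linear_combination (-2*s^2*n*r - 2*s^2*n^2*r^2 - 3*s^3 + s^3*t + 2*s^3*r^2 + 4*s^3*n*r
      + 4*s^3*n^2*r^2 + s^4 - s^4*t - 2*s^4*r^2 + 8*s^5 - 2*s^5*t - 4*s^5*r^2 + 4*s^6) * ht
  have h4s : (0:ℝ) < 4*s^2 := by positivity
  have hX : 0 ≤ 4*s^2*((r^2*s*(s+1)*(-2*n^2+2*s*(s+1)-1) +
      (1/4)*(6*n^2*r^2 - 2*n*r*(4*s*(s+1)-3) + s*(s+1)*(-2*r^2+4*s*(s+1)-3))) -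
      (s - t + 2)/2 * (s*(s+1)*(2*s-1)*(2*s+3))) := by linarith
  have := (mul_nonneg_iff_of_pos_left h4s).mp hX
  linarith

/-- for spin s > 1, the worst-case squared calibration error
    max_m (A_s(r,n) + m² B_s(r,n)) is at least Δ_min(s) = (s − √(2s+3) + 2)/2 for all
    admissible n and all r ≥ 0, and at n = s, r = (2s − √(2s+3) + 3)/2 one has
    B_s = 0 and the common value A_s + m²B_s = Δ_min(s) for every m. -/
theorem minimal_measurement_uncertainty (j : ℕ) (hj : 3 ≤ j) :
    (∀ (k : Fin (j + 1)) (r : ℝ), 0 ≤ r →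
      (sVal j - Real.sqrt (2 * sVal j + 3) + 2) / 2 ≤
        ⨆ m : Fin (j + 1),
          (Afun j r (mVal j k) + (mVal j m) ^ 2 * Bfun j r (mVal j k))) ∧
    Bfun j ((2 * sVal j - Real.sqrt (2 * sVal j + 3) + 3) / 2) (sVal j) = 0 ∧
    (∀ m : Fin (j + 1),
      Afun j ((2 * sVal j - Real.sqrt (2 * sVal j + 3) + 3) / 2) (sVal j) +
          (mVal j m) ^ 2 *
            Bfun j ((2 * sVal j - Real.sqrt (2 * sVal j + 3) + 3) / 2) (sVal j) =
        (sVal j - Real.sqrt (2 * sVal j + 3) + 2) / 2) := by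
  set s := sVal j with hsdef
  have hs : (3:ℝ)/2 ≤ s := by
    have : (3:ℝ) ≤ (j:ℝ) := by exact_mod_cast hj
    simp only [hsdef, sVal]; linarith
  set t := Real.sqrt (2 * s + 3) with htdef
  have ht : t^2 = 2*s+3 := Real.sq_sqrt (by linarith)
  have ht0 : 0 ≤ t := Real.sqrt_nonneg _
  have hD : (0:ℝ) < s*(s+1)*(2*s-1)*(2*s+3) := by
    have h1 : (0:ℝ) < s := by linarith
    have h2 : (0:ℝ) < s+1 := by linarith
    have h3 : (0:ℝ) < 2*s-1 := by linarith
    have h4 : (0:ℝ) < 2*s+3 := by linarith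
    positivity
  have hB0 : Bfun j ((2 * s - t + 3) / 2) s = 0 := by
    simp only [Bfun, ← hsdef]
    rw [div_eq_zero_iff]
    left
    linear_combination (s^2 - s/2) * ht
  refine ⟨?_, hB0, ?_⟩
  · intro k r hr
    set n := mVal j k with hndef
    have hn2 : n ≤ s := by
      have : (k:ℝ) ≤ (j:ℝ) := by exact_mod_cast Nat.lt_succ_iff.mp k.isLt
      simp only [hndef, mVal, hsdef, sVal]; linarith
    have hn : -s ≤ n := by
      have : (0:ℝ) ≤ (k:ℝ) := by positivity
      simp only [hndef, mVal, hsdef, sVal]; linarith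
    have hABexp : ∀ x : ℝ, Afun j r n + x * Bfun j r n =
        (r^2*s*(s+1)*(-2*n^2+2*s*(s+1)-1) +
          x*(6*n^2*r^2 - 2*n*r*(4*s*(s+1)-3) + s*(s+1)*(-2*r^2+4*s*(s+1)-3))) /
        (s*(s+1)*(2*s-1)*(2*s+3)) := by
      intro x
      simp only [Afun, Bfun, ← hsdef]
      field_simp
    rcases le_or_gt 0 (6*n^2*r^2 - 2*n*r*(4*s*(s+1)-3) + s*(s+1)*(-2*r^2+4*s*(s+1)-3))
      with hB | hB
    · refine le_trans ?_ (le_ciSup (Set.finite_range _).bddAbove ⟨j, by omega⟩)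
      have hm : mVal j ⟨j, by omega⟩ = s := by
        simp only [mVal, hsdef, sVal, Fin.val_mk]
        push_cast; ring
      rw [hm, hABexp (s^2), le_div_iff₀ hD]
      have := key1 s n r t hs hn hn2 hr ht ht0 hB
      linarith
    · have hkh : (j+1)/2 < j + 1 := by omega
      refine le_trans ?_ (le_ciSup (Set.finite_range _).bddAbove ⟨(j+1)/2, hkh⟩)
      have hmsq : (mVal j ⟨(j+1)/2, hkh⟩)^2 ≤ 1/4 := by
        have hpar : 2 * ((j+1)/2) = j ∨ 2 * ((j+1)/2) = j + 1 := by omega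
        simp only [mVal, hsdef, sVal, Fin.val_mk]
        rcases hpar with hp | hp
        · have : ((j:ℝ)) = 2 * (((j+1)/2 : ℕ) : ℝ) := by exact_mod_cast hp.symm
          rw [this]; ring_nf; norm_num
        · have : ((j:ℝ)) = 2 * (((j+1)/2 : ℕ) : ℝ) - 1 := by
            have : ((j:ℝ)) + 1 = 2 * (((j+1)/2 : ℕ) : ℝ) := by exact_mod_cast hp.symm
            linarith
          rw [this]; ring_nf; norm_num
      have hBneg : Bfun j r n < 0 := by
        rw [show Bfun j r n = (6*n^2*r^2 - 2*n*r*(4*s*(s+1)-3) +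
            s*(s+1)*(-2*r^2+4*s*(s+1)-3)) / (s*(s+1)*(2*s-1)*(2*s+3)) by
          simp only [Bfun, ← hsdef]]
        exact div_neg_of_neg_of_pos hB hD
      have step1 : Afun j r n + (1/4) * Bfun j r n ≤
          Afun j r n + (mVal j ⟨(j+1)/2, hkh⟩)^2 * Bfun j r n := by
        have := mul_le_mul_of_nonpos_right hmsq (le_of_lt hBneg)
        linarith
      refine le_trans ?_ step1
      rw [hABexp (1/4), le_div_iff₀ hD]
      have := key2 s n r t hs hn hn2 hr ht ht0 (le_of_lt hB)
      linarith
  · intro m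
    rw [hB0, mul_zero, add_zero]
    simp only [Afun, ← hsdef]
    rw [div_eq_iff (ne_of_gt hD)]
    linear_combination (s^3/2 + s^2/4 - s/4) * ht
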